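/- Let F be a differential field of characteristic zero, let E be an iterated antiderivative extension of F, and let K be a differential subfield of E with K ⊇ F. Then K is algebraically closed in E: every element of E that is algebraic over K lies in K. -/

import Mathlib

/-- A derivation on a field: an additive map satisfying the Leibniz rule. -/
def IsDeriv {E : Type*} [Field E] (D : E → E) : Prop :=
  (∀ x y : E, D (x + y) = D x + D y) ∧ ∀ x y : E, D (x * y) = D x * y + x * D y

/-- A subfield closed under the derivation, i.e. a differential subfield. -/
def IsDiffSubfield {E : Type*} [Field E] (D : E → E) (K : Subfield E) : Prop :=
  ∀ x ∈ K, D x ∈ K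

/-- The subfield generated by a subfield `F` together with a set `S`, i.e. `F(S)`. -/
def adjoinSF {E : Type*} [Field E] (F : Subfield E) (S : Set E) : Subfield E :=
  Subfield.closure (↑F ∪ S)

/-- `ζ 0, …, ζ (n-1)` are iterated antiderivatives of `F`:
`(ζ i)' ∈ F(ζ 0, …, ζ (i-1))` for every `i`. -/
def IsIterAntideriv {E : Type*} [Field E] (D : E → E) (F : Subfield E) {n : ℕ}
    (ζ : Fin n → E) : Prop :=
  ∀ i, D (ζ i) ∈ adjoinSF F (ζ '' {j | j < i})

/-- `M` is a no new constants extension of `K`: the constants of `M` are exactly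
the constants of `K`. -/
def NoNewConstants {E : Type*} [Field E] (D : E → E) (K M : Subfield E) : Prop :=
  K ≤ M ∧ ∀ x ∈ M, D x = 0 → x ∈ K

/-- `K` is an iterated antiderivative extension of `F`. -/
def IsIAE {E : Type*} [Field E] (D : E → E) (F K : Subfield E) : Prop :=
  NoNewConstants D F K ∧
    ∃ (n : ℕ) (ζ : Fin n → E), IsIterAntideriv D F ζ ∧ K = adjoinSF F (Set.range ζ)

/-- `K` is an antiderivative extension of `F`. -/
def IsAE {E : Type*} [Field E] (D : E → E) (F K : Subfield E) : Prop :=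
  NoNewConstants D F K ∧
    ∃ (n : ℕ) (ζ : Fin n → E), (∀ i, D (ζ i) ∈ (F : Set E)) ∧ K = adjoinSF F (Set.range ζ)

/-- A differential automorphism of `E` over `F`: a field automorphism fixing `F`
pointwise and commuting with the derivation. -/
def IsDiffAut {E : Type*} [Field E] (D : E → E) (F : Subfield E) (σ : E ≃+* E) : Prop :=
  (∀ x ∈ F, σ x = x) ∧ ∀ y : E, σ (D y) = D (σ y)

/-- `M` is a minimal differential field extension of `K`. -/
def IsMinimalDiffExt {E : Type*} [Field E] (D : E → E) (K M : Subfield E) : Prop :=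
  IsDiffSubfield D M ∧ K < M ∧
    ∀ L : Subfield E, IsDiffSubfield D L → K ≤ L → L ≤ M → L = K ∨ L = M

/-- The field of constants of a differential subfield `F`. -/
def constantsOf {E : Type*} [Field E] (D : E → E) (hD : IsDeriv D) (F : Subfield E) :
    Subfield E where
  carrier := {x : E | x ∈ F ∧ D x = 0}
  zero_mem' := by
    refine ⟨F.zero_mem, ?_⟩
    have h := hD.1 0 0
    simp only [add_zero] at h
    exact left_eq_add.mp h
  one_mem' := by
    refine ⟨F.one_mem, ?_⟩
    have h := hD.2 1 1
    simp only [mul_one, one_mul] at h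
    exact left_eq_add.mp h
  add_mem' := by
    rintro a b ⟨haF, ha⟩ ⟨hbF, hb⟩
    exact ⟨F.add_mem haF hbF, by rw [hD.1 a b, ha, hb, add_zero]⟩
  mul_mem' := by
    rintro a b ⟨haF, ha⟩ ⟨hbF, hb⟩
    exact ⟨F.mul_mem haF hbF, by rw [hD.2 a b, ha, hb, zero_mul, mul_zero, add_zero]⟩
  neg_mem' := by
    rintro a ⟨haF, ha⟩
    refine ⟨F.neg_mem haF, ?_⟩
    have h0 : D 0 = 0 := by
      have h := hD.1 0 0
      simp only [add_zero] at h
      exact left_eq_add.mp h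
    have h := hD.1 a (-a)
    rw [add_neg_cancel, h0, ha, zero_add] at h
    exact h.symm
  inv_mem' := by
    rintro a ⟨haF, ha⟩
    refine ⟨F.inv_mem haF, ?_⟩
    by_cases h0 : a = 0
    · subst h0; rw [inv_zero]; exact ha
    · have h1 : D 1 = 0 := by
        have h := hD.2 1 1
        simp only [mul_one, one_mul] at h
        exact left_eq_add.mp h
      have h := hD.2 a a⁻¹
      rw [mul_inv_cancel₀ h0, h1, ha, zero_mul, zero_add] at h
      rcases mul_eq_zero.mp h.symm with h' | h'
      · exact absurd h' h0
      · exact h'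

/-- The antiderivative closure of `L` in `E`: the subfield generated over `L`
by all antiderivatives of `L` lying in `E`. -/
def adCl {E : Type*} [Field E] (D : E → E) (L : Subfield E) : Subfield E :=
  adjoinSF L {x : E | D x ∈ L}

/-- The differential subfield generated by `F` and `u`, i.e. `F⟨u⟩ = F(u, u', u'', …)`. -/
def diffAdjoin {E : Type*} [Field E] (D : E → E) (F : Subfield E) (u : E) : Subfield E :=
  sInf {M : Subfield E | IsDiffSubfield D M ∧ F ≤ M ∧ u ∈ M}

/-- The transcendence degree of `K` over `F` (both viewed inside an ambient field `E`):
the supremum of cardinalities of subsets of `K` that are algebraically independent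
over `F`. -/
noncomputable def trdegSF {E : Type*} [Field E] (F K : Subfield E) : Cardinal :=
  ⨆ s : {s : Set E // s ⊆ (K : Set E) ∧ AlgebraicIndependent F ((↑) : s → E)},
    Cardinal.mk s.1

/-!
Induct on the number of iterated antiderivatives, adjoining the first one `t` (so `t′ ∈ K`) to
the base field: by induction `u ∈ K(t)`, and `K` is algebraically closed in `K(t)`. If `t` is
transcendental over `K` this holds for every simple transcendental extension. If `t` is algebraic
with minimal polynomial `X^N + c X^(N-1) + ⋯`, differentiating `p(t) = 0` gives a relation of
lower degree, which must vanish; its `X^(N-1)` coefficient says that `N t + c` is a constant,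
hence lies in `K` since there are no new constants, and so `t ∈ K`.
-/

open Polynomial

section Derivation

variable {E : Type*} [Field E] {D : E → E}

def IsDeriv.toDerivation (hD : IsDeriv D) : Derivation ℤ E E :=
  Derivation.mk' (AddMonoidHom.mk' D hD.1).toIntLinearMap fun a b => by
    simp only [AddMonoidHom.coe_toIntLinearMap, AddMonoidHom.mk'_apply, hD.2, smul_eq_mul]
    ring

def IsDiffSubfield.toDerivation (hD : IsDeriv D) {K : Subfield E} (hK : IsDiffSubfield D K) :
    Derivation ℤ K K :=
  Derivation.mk' (AddMonoidHom.mk' (fun x : K => (⟨D x, hK x x.2⟩ : K))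
      fun x y => Subtype.ext (hD.1 x y)).toIntLinearMap fun a b => by
    ext
    simp only [AddMonoidHom.coe_toIntLinearMap, AddMonoidHom.mk'_apply, smul_eq_mul,
      Subfield.coe_mul, Subfield.coe_add, hD.2]
    ring

end Derivation

namespace Differential

theorem exists_deriv_natDegree_minpoly_mul_add_eq_zero {K R : Type*} [Field K] [Differential K]
    [CommRing R] [Nontrivial R] [Differential R] [Algebra K R] [DifferentialAlgebra K R] {t : R}
    (ht : IsIntegral K t) {b : K} (htb : t′ = algebraMap K R b) :
    ∃ c : K, (((minpoly K t).natDegree : R) * t + algebraMap K R c)′ = 0 := by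
  set p := minpoly K t
  obtain ⟨m, hm⟩ : ∃ m, p.natDegree = m + 1 :=
    Nat.exists_eq_add_one.2 (minpoly.natDegree_pos ht)
  have hmonic : p.Monic := minpoly.monic ht
  -- `q(t) = (p(t))′ = 0` (as `t′ = b`), and `q` has lower degree than `p` since `p` is monic
  set q := mapCoeffs p + C b * derivative p
  have hq_coeff (k : ℕ) : q.coeff k = (p.coeff k)′ + b * (p.coeff (k + 1) * (k + 1)) := by
    simp only [q, coeff_add, coeff_mapCoeffs, coeff_C_mul, coeff_derivative]
  have hq_aeval : aeval t q = 0 := by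
    have := deriv_aeval_eq t p
    rw [minpoly.aeval, Derivation.map_zero, htb] at this
    simp only [q, map_add, map_mul, aeval_C]
    linear_combination -this
  have hq_degree : q.degree < p.natDegree := by
    refine (degree_lt_iff_coeff_zero _ _).2 fun k hk => ?_
    rw [hq_coeff, coeff_eq_zero_of_natDegree_lt (by omega : p.natDegree < k + 1)]
    rcases hk.eq_or_lt with rfl | hlt
    · simp [hmonic.coeff_natDegree]
    · simp [coeff_eq_zero_of_natDegree_lt hlt]
  have hq : q = 0 := by
    by_contra hq0
    have := minpoly.degree_le_of_ne_zero K t hq0 hq_aeval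
    rw [degree_eq_natDegree (minpoly.ne_zero ht)] at this
    exact (this.trans_lt hq_degree).false
  refine ⟨p.coeff m, ?_⟩
  have hm_coeff := hq_coeff m
  rw [hq, coeff_zero, ← hm, hmonic.coeff_natDegree] at hm_coeff
  rw [hm, Nat.cast_succ]
  simp only [map_add, Derivation.leibniz, Derivation.map_natCast, Derivation.map_one_eq_zero, htb,
    deriv_algebraMap, smul_eq_mul]
  have := congrArg (algebraMap K R) hm_coeff
  simp only [map_zero, map_add, map_mul, map_natCast, map_one] at this
  linear_combination -this

end Differential

open IntermediateField in
theorem IntermediateField.mem_bot_of_isAlgebraic_of_mem_adjoin_simple {K E : Type*} [Field K]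
    [Field E] [Algebra K E] {t u : E} (ht : Transcendental K t) (hu : IsAlgebraic K u)
    (hut : u ∈ K⟮t⟯) : u ∈ (⊥ : IntermediateField K E) := by
  obtain ⟨r, s, hrs⟩ := (mem_adjoin_simple_iff K u).1 hut
  by_cases hs : aeval t s = 0
  · rw [hrs, hs, div_zero]
    exact zero_mem _
  -- `t` stays transcendental over the algebraic closure `M` of `K` in `E`, which contains `u`,
  -- so `u * s(t) = r(t)` is an identity `u * s = r` in `M[X]`
  set M := algebraicClosure K E
  let v : M := ⟨u, mem_algebraicClosure_iff.2 hu⟩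
  have hpoly : C v * s.map (algebraMap K M) - r.map (algebraMap K M) = 0 := by
    refine transcendental_iff.1 ht.algebraicClosure _ ?_
    rw [map_sub, map_mul, aeval_C, aeval_map_algebraMap, aeval_map_algebraMap]
    change u * _ - _ = 0
    rw [hrs, div_mul_cancel₀ _ hs, sub_self]
  have hs0 : s ≠ 0 := by rintro rfl; simp at hs
  set d := s.natDegree
  have hcoeff := congrArg (fun f => algebraMap M E (f.coeff d)) hpoly
  simp only [coeff_sub, coeff_C_mul, coeff_map, coeff_zero, map_sub, map_mul, map_zero,
    ← IsScalarTower.algebraMap_apply] at hcoeff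
  change u * _ - _ = 0 at hcoeff
  have hsd : algebraMap K E (s.coeff d) ≠ 0 :=
    (_root_.map_ne_zero _).2 (leadingCoeff_ne_zero.2 hs0)
  rw [mem_bot]
  refine ⟨r.coeff d / s.coeff d, ?_⟩
  rw [map_div₀, div_eq_iff hsd]
  linear_combination -hcoeff

section adjoinSF

variable {E : Type*} [Field E]

theorem le_adjoinSF (F : Subfield E) (S : Set E) : F ≤ adjoinSF F S :=
  fun _ hx => Subfield.subset_closure (Or.inl hx)

theorem subset_adjoinSF (F : Subfield E) (S : Set E) : S ⊆ adjoinSF F S :=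
  fun _ hx => Subfield.subset_closure (Or.inr hx)

theorem adjoinSF_le {F M : Subfield E} {S : Set E} (hF : F ≤ M) (hS : S ⊆ M) :
    adjoinSF F S ≤ M :=
  Subfield.closure_le.2 (Set.union_subset hF hS)

theorem adjoinSF_mono {F K : Subfield E} {S T : Set E} (hFK : F ≤ K) (hST : S ⊆ T) :
    adjoinSF F S ≤ adjoinSF K T :=
  adjoinSF_le (hFK.trans (le_adjoinSF K T)) (hST.trans (subset_adjoinSF K T))

theorem adjoinSF_eq_self {F : Subfield E} {S : Set E} (h : S ⊆ F) : adjoinSF F S = F :=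
  (adjoinSF_le le_rfl h).antisymm (le_adjoinSF F S)

theorem adjoinSF_adjoinSF (F : Subfield E) (S T : Set E) :
    adjoinSF (adjoinSF F S) T = adjoinSF F (S ∪ T) := by
  apply le_antisymm
  · exact adjoinSF_le (adjoinSF_mono le_rfl Set.subset_union_left)
      (Set.subset_union_right.trans (subset_adjoinSF F _))
  · exact adjoinSF_le ((le_adjoinSF F S).trans (le_adjoinSF _ T))
      (Set.union_subset ((subset_adjoinSF F S).trans (le_adjoinSF _ T)) (subset_adjoinSF _ T))

theorem adjoinSF_eq_toSubfield_adjoin (K : Subfield E) (S : Set E) :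
    adjoinSF K S = (IntermediateField.adjoin K S).toSubfield := by
  rw [IntermediateField.adjoin_toSubfield, adjoinSF]
  congr
  ext x
  exact ⟨fun hx => ⟨⟨x, hx⟩, rfl⟩, by rintro ⟨y, rfl⟩; exact y.2⟩

theorem IsAlgebraic.of_subfield_le {K K' : Subfield E} (h : K ≤ K') {u : E}
    (hu : IsAlgebraic K u) : IsAlgebraic K' u := by
  let _ : Algebra K K' := (Subfield.inclusion h).toAlgebra
  have : IsScalarTower K K' E := IsScalarTower.of_algebraMap_eq fun _ => rfl
  exact hu.extendScalars (Subfield.inclusion h).injective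

end adjoinSF

section IterAntideriv

variable {E : Type*} [Field E] {D : E → E}

theorem isDiffSubfield_adjoinSF (hD : IsDeriv D) {K : Subfield E} (hK : IsDiffSubfield D K)
    {S : Set E} (hS : ∀ x ∈ S, D x ∈ adjoinSF K S) : IsDiffSubfield D (adjoinSF K S) := by
  intro x hx
  let d := hD.toDerivation
  change d x ∈ _
  induction hx using Subfield.closure_induction with
  | mem x hx => exact hx.elim (fun hxK => le_adjoinSF K S (hK x hxK)) (hS x)
  | one => rw [d.map_one_eq_zero]; exact zero_mem _
  | add x y _ _ hx hy => rw [map_add]; exact add_mem hx hy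
  | neg x _ hx => rw [map_neg]; exact neg_mem hx
  | inv x hxL hx =>
    rw [d.leibniz_inv, smul_eq_mul]
    exact mul_mem (neg_mem (pow_mem (inv_mem hxL) 2)) hx
  | mul x y hxL hyL hx hy =>
    rw [d.leibniz, smul_eq_mul, smul_eq_mul]
    exact add_mem (mul_mem hxL hy) (mul_mem hyL hx)

theorem NoNewConstants.of_le {K K' M M' : Subfield E} (h : NoNewConstants D K M) (hK : K ≤ K')
    (hK'M' : K' ≤ M') (hM : M' ≤ M) : NoNewConstants D K' M' :=
  ⟨hK'M', fun x hx hx0 => hK (h.2 x (hM hx) hx0)⟩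

theorem IsIterAntideriv.deriv_zero_mem {K : Subfield E} {n : ℕ} {ζ : Fin (n + 1) → E}
    (hζ : IsIterAntideriv D K ζ) : D (ζ 0) ∈ K := by
  simpa [Fin.not_lt_zero, adjoinSF_eq_self] using hζ 0

theorem IsIterAntideriv.tail {K : Subfield E} {n : ℕ} {ζ : Fin (n + 1) → E}
    (hζ : IsIterAntideriv D K ζ) : IsIterAntideriv D (adjoinSF K {ζ 0}) (Fin.tail ζ) := by
  intro i
  rw [adjoinSF_adjoinSF]
  refine adjoinSF_mono le_rfl ?_ (hζ i.succ)
  rintro _ ⟨j, hj, rfl⟩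
  rcases Fin.eq_zero_or_eq_succ j with rfl | ⟨k, rfl⟩
  · exact Or.inl rfl
  · exact Or.inr ⟨k, Fin.succ_lt_succ_iff.1 hj, rfl⟩

theorem adjoinSF_range_fin_succ (K : Subfield E) {n : ℕ} (ζ : Fin (n + 1) → E) :
    adjoinSF K (Set.range ζ) = adjoinSF (adjoinSF K {ζ 0}) (Set.range (Fin.tail ζ)) := by
  rw [adjoinSF_adjoinSF, ← Set.insert_eq, Fin.range_fin_succ]

theorem IsIAE.of_le {F K L : Subfield E} (h : IsIAE D F L) (hFK : F ≤ K) (hKL : K ≤ L) :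
    IsIAE D K L := by
  obtain ⟨hC, n, ζ, hζ, rfl⟩ := h
  refine ⟨hC.of_le hFK hKL le_rfl, n, ζ, fun i => adjoinSF_mono hFK subset_rfl (hζ i), ?_⟩
  exact le_antisymm (adjoinSF_mono hFK subset_rfl)
    (adjoinSF_le hKL (subset_adjoinSF F _))

end IterAntideriv

section AlgebraicallyClosed

variable {E : Type*} [Field E] [CharZero E] {D : E → E}

theorem IsDiffSubfield.mem_of_isAlgebraic_of_deriv_mem (hD : IsDeriv D) {K : Subfield E}
    (hK : IsDiffSubfield D K) {t : E} (hC : NoNewConstants D K (adjoinSF K {t}))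
    (ht : D t ∈ K) (hta : IsAlgebraic K t) : t ∈ K := by
  let _ : Differential E := ⟨hD.toDerivation⟩
  let _ : Differential K := ⟨hK.toDerivation hD⟩
  have : DifferentialAlgebra K E := ⟨fun _ => rfl⟩
  obtain ⟨c, hc⟩ :=
    Differential.exists_deriv_natDegree_minpoly_mul_add_eq_zero hta.isIntegral (b := ⟨D t, ht⟩) rfl
  set N := (minpoly K t).natDegree
  have hN : (N : E) ≠ 0 := Nat.cast_ne_zero.2 (minpoly.natDegree_pos hta.isIntegral).ne'
  have hs : (N : E) * t + c ∈ K := hC.2 _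
    (add_mem (mul_mem (natCast_mem _ N) (subset_adjoinSF K {t} rfl)) (le_adjoinSF K _ c.2)) hc
  have htc : t = ((N * t + c) - c) / N := eq_div_of_mul_eq hN (by ring)
  rw [htc]
  exact div_mem (sub_mem hs c.2) (natCast_mem K N)

theorem IsDiffSubfield.mem_of_isAlgebraic_of_mem_adjoinSF_singleton (hD : IsDeriv D)
    {K : Subfield E} (hK : IsDiffSubfield D K) {t : E} (hC : NoNewConstants D K (adjoinSF K {t}))
    (ht : D t ∈ K) {u : E} (hu : IsAlgebraic K u) (hut : u ∈ adjoinSF K {t}) : u ∈ K := by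
  by_cases hta : IsAlgebraic K t
  · rwa [adjoinSF_eq_self (Set.singleton_subset_iff.2
      (hK.mem_of_isAlgebraic_of_deriv_mem hD hC ht hta))] at hut
  · rw [adjoinSF_eq_toSubfield_adjoin] at hut
    obtain ⟨v, rfl⟩ := IntermediateField.mem_bot.1
      (IntermediateField.mem_bot_of_isAlgebraic_of_mem_adjoin_simple hta hu hut)
    exact v.2

theorem IsDiffSubfield.mem_of_isAlgebraic_of_isIterAntideriv (hD : IsDeriv D) {K : Subfield E}
    (hK : IsDiffSubfield D K) {n : ℕ} {ζ : Fin n → E} (hζ : IsIterAntideriv D K ζ)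
    (hC : NoNewConstants D K (adjoinSF K (Set.range ζ))) {u : E}
    (hu : u ∈ adjoinSF K (Set.range ζ)) (hua : IsAlgebraic K u) : u ∈ K := by
  induction n generalizing K with
  | zero => rwa [Set.range_eq_empty, adjoinSF_eq_self (Set.empty_subset _)] at hu
  | succ n ih =>
    have hKK' := le_adjoinSF K {ζ 0}
    have hK' : IsDiffSubfield D (adjoinSF K {ζ 0}) := isDiffSubfield_adjoinSF hD hK fun x hx => by
      rw [Set.mem_singleton_iff.1 hx]
      exact hKK' hζ.deriv_zero_mem
    rw [adjoinSF_range_fin_succ] at hu hC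
    have huK' : u ∈ adjoinSF K {ζ 0} := ih hK' hζ.tail
      (hC.of_le hKK' (le_adjoinSF _ _) le_rfl) hu (hua.of_subfield_le hKK')
    exact hK.mem_of_isAlgebraic_of_mem_adjoinSF_singleton hD
      (hC.of_le le_rfl hKK' (le_adjoinSF _ _)) hζ.deriv_zero_mem hua huK'

theorem IsIAE.mem_of_isAlgebraic (hD : IsDeriv D) {K L : Subfield E} (h : IsIAE D K L)
    (hK : IsDiffSubfield D K) {u : E} (huL : u ∈ L) (hu : IsAlgebraic K u) : u ∈ K := by
  obtain ⟨hC, n, ζ, hζ, rfl⟩ := h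
  exact hK.mem_of_isAlgebraic_of_isIterAntideriv hD hζ hC huL hu

end AlgebraicallyClosed

theorem statement5_general {E : Type*} [Field E] [CharZero E] (D : E → E) (hD : IsDeriv D)
    (F K : Subfield E)
    (hK : IsDiffSubfield D K)
    (hIAE : IsIAE D F ⊤) (hFK : F ≤ K)
    (u : E) (hu : IsAlgebraic K u) :
    u ∈ K :=
  (hIAE.of_le hFK le_top).mem_of_isAlgebraic hD hK (Subfield.mem_top u) hu

/-- if `E` (the ambient field, `⊤`) is an iterated antiderivative
extension of `F` and `K ⊇ F` is a differential subfield of `E`, then `K` is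
algebraically closed in `E`: every element of `E` algebraic over `K` lies in `K`. -/
theorem statement5 {E : Type*} [Field E] [CharZero E] (D : E → E) (hD : IsDeriv D)
    (F K : Subfield E)
    (hF : IsDiffSubfield D F) (hK : IsDiffSubfield D K)
    (hIAE : IsIAE D F ⊤) (hFK : F ≤ K)
    (u : E) (hu : IsAlgebraic K u) :
    u ∈ K :=
  statement5_general D hD F K hK hIAE hFK u hu
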